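/- arXiv:2502.12779 — 7 statements merged into one kernel-verified Lean document; each statement's English description precedes it below -/
import Mathlib

section
/- For every α ∈ (0,1) ∪ (1,∞), the function h(r) = -r·(r^(α-1) - 1)/(α-1) satisfies 0 ≤ h(r) ≤ α^(α/(1-α)) for all r ∈ [0,1]. -/
/-- For every α ∈ (0,1) ∪ (1,∞), the function
h(r) = -r·(r^(α-1) - 1)/(α-1) satisfies 0 ≤ h(r) ≤ α^(α/(1-α)) for all r ∈ [0,1]. -/
theorem ccte_integrand_bounds (α : ℝ) (hα : α ∈ Set.Ioo (0:ℝ) 1 ∪ Set.Ioi (1:ℝ))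
    (r : ℝ) (hr : r ∈ Set.Icc (0:ℝ) 1) :
    0 ≤ -r * ((r ^ (α - 1) - 1) / (α - 1)) ∧
      -r * ((r ^ (α - 1) - 1) / (α - 1)) ≤ α ^ (α / (1 - α)) := by
  obtain ⟨hr0, hr1⟩ := hr
  have hα0 : 0 < α := by
    rcases hα with h | h
    · exact h.1
    · have := Set.mem_Ioi.mp h; linarith
  set M : ℝ := α ^ (α / (1 - α)) with hM
  have hM0 : 0 < M := Real.rpow_pos_of_pos hα0 _
  rcases eq_or_lt_of_le hr0 with rfl | hr0'
  · simpa using hM0.le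
  have hne : (1:ℝ) - α ≠ 0 := by
    rcases hα with h | h
    · have := h.2; intro hh; linarith
    · have := Set.mem_Ioi.mp h; intro hh; linarith
  have hrw : -r * ((r ^ (α - 1) - 1) / (α - 1)) = (r - r ^ α) / (α - 1) := by
    have h1 : r ^ α = r * r ^ (α - 1) := by
      nth_rewrite 1 [show α = 1 + (α - 1) by ring]
      rw [Real.rpow_add hr0', Real.rpow_one]
    rw [h1]; field_simp; ring
  rw [hrw]
  -- critical point c = α * M = α ^ (1/(1-α)), with c ^ α = M
  set c : ℝ := α * M with hc
  have hc0 : 0 < c := mul_pos hα0 hM0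
  have hcpow : c = α ^ ((1:ℝ) / (1 - α)) := by
    rw [hc, hM]
    nth_rewrite 1 [← Real.rpow_one α]
    rw [← Real.rpow_add hα0]
    congr 1
    field_simp
    ring
  have hcα : c ^ α = M := by
    rw [hcpow, ← Real.rpow_mul hα0.le, hM]
    congr 1
    field_simp
  -- Bernoulli setup
  have hs : (-1:ℝ) ≤ r / c - 1 := by
    have : 0 ≤ r / c := div_nonneg hr0 hc0.le
    linarith
  have hkey : ((1:ℝ) + (r / c - 1)) ^ α = r ^ α / M := by
    rw [show (1:ℝ) + (r / c - 1) = r / c by ring, Real.div_rpow hr0 hc0.le, hcα]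
  rcases hα with h | h
  · -- α ∈ (0,1)
    obtain ⟨_, hα1⟩ := h
    have hden : α - 1 < 0 := by linarith
    constructor
    ·
      apply div_nonneg_of_nonpos _ hden.le
      have : r ≤ r ^ α := by
        calc r = r ^ (1:ℝ) := (Real.rpow_one r).symm
        _ ≤ r ^ α := Real.rpow_le_rpow_of_exponent_ge hr0' hr1 hα1.le
      linarith
    · -- upper bound via Bernoulli (concave case)
      have hb := rpow_one_add_le_one_add_mul_self hs hα0.le hα1.le
      rw [hkey] at hb
      -- r^α / M ≤ 1 + α*(r/c - 1)  ⇒  r^α ≤ M + r - c  ⇒ r - r^α ≥ c - M = M(α-1)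
      have h2 : r ^ α ≤ M + r - c := by
        have := (div_le_iff₀ hM0).mp hb
        have hαMc : α * M = c := hc.symm
        have : r ^ α ≤ (1 + α * (r / c - 1)) * M := this
        calc r ^ α ≤ (1 + α * (r / c - 1)) * M := this
        _ = M + (α * M / c) * r - α * M := by ring
        _ = M + r - c := by rw [hαMc]; field_simp
      have h3 : M * (α - 1) ≤ r - r ^ α := by
        have : c - M = M * (α - 1) := by rw [hc]; ring
        linarith
      rw [div_le_iff_of_neg hden]
      linarith
  · -- α > 1
    have hα1 : 1 < α := Set.mem_Ioi.mp h
    have hden : 0 < α - 1 := by linarith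
    constructor
    · apply div_nonneg _ hden.le
      have : r ^ α ≤ r := by
        calc r ^ α ≤ r ^ (1:ℝ) := Real.rpow_le_rpow_of_exponent_ge hr0' hr1 hα1.le
        _ = r := Real.rpow_one r
      linarith
    · have hb := one_add_mul_self_le_rpow_one_add hs hα1.le
      rw [hkey] at hb
      have h2 : M + r - c ≤ r ^ α := by
        have := (le_div_iff₀ hM0).mp hb
        have hαMc : α * M = c := hc.symm
        calc M + r - c = M + (α * M / c) * r - α * M := by rw [hαMc]; field_simp
        _ = (1 + α * (r / c - 1)) * M := by ring
        _ ≤ r ^ α := this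
      have h3 : r - r ^ α ≤ M * (α - 1) := by
        have : c - M = M * (α - 1) := by rw [hc]; ring
        linarith
      rw [div_le_iff₀ hden]
      linarith
end

section
/- The cumulative copula Tsallis entropy of the bivariate Fréchet–Hoeffding lower bound copula W(u₁,u₂) = max{u₁+u₂-1, 0} equals (α+4)/(6(α+1)(α+2)), i.e., -∫₀¹∫₀¹ W(u₁,u₂)·(W(u₁,u₂)^(α-1) - 1)/(α-1) du₁ du₂ = (α+4)/(6(α+1)(α+2)) for every α ∈ (0,1) ∪ (1,∞), where the integrand is 0 when W = 0. -/
/-!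
On the unit square `W(u₁, u₂) = max (u₁ + u₂ - 1) 0` depends only on `u₁ + u₂`, and its integrand
`W · log_[α] W = (W ^ α - W) / (α - 1)` vanishes with `W`. The shift `t = u₁ + u₂ - 1` therefore
turns the inner integral into `∫ t in 0..u₁, (t ^ α - t) / (α - 1)`, and the remaining iterated
integral of powers is elementary.
-/

open MeasureTheory

lemma mul_rpow_sub_one_sub_one {x : ℝ} (hx : 0 ≤ x) {α : ℝ} (hα : α ≠ 0) :
    x * (x ^ (α - 1) - 1) = x ^ α - x := by
  rcases hx.eq_or_lt with rfl | hx
  · simp [Real.zero_rpow hα]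
  · rw [Real.rpow_sub_one hx.ne']
    field_simp

lemma setIntegral_Icc_eq_intervalIntegral {E : Type*} [NormedAddCommGroup E] [NormedSpace ℝ E]
    {f : ℝ → E} {a b : ℝ} (hab : a ≤ b) :
    ∫ x in Set.Icc a b, f x = ∫ x in a..b, f x := by
  rw [integral_Icc_eq_integral_Ioc, intervalIntegral.integral_of_le hab]

lemma intervalIntegral.integral_comp_max_add_sub_one {f : ℝ → ℝ} (hf : Continuous f)
    (hf0 : f 0 = 0) {a : ℝ} (ha₀ : 0 ≤ a) (ha₁ : a ≤ 1) :
    ∫ u in (0:ℝ)..1, f (max (a + u - 1) 0) = ∫ t in (0:ℝ)..a, f t := by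
  set g : ℝ → ℝ := fun t => f (max t 0)
  have hg : Continuous g := hf.comp (continuous_id.max continuous_const)
  have hshift : ∫ u in (0:ℝ)..1, f (max (a + u - 1) 0) = ∫ t in (a - 1)..a, g t := calc
    _ = ∫ u in (0:ℝ)..1, g (u + (a - 1)) := by simp only [g, add_sub_assoc, add_comm a]
    _ = ∫ t in (0 + (a - 1))..(1 + (a - 1)), g t := intervalIntegral.integral_comp_add_right g _
    _ = ∫ t in (a - 1)..a, g t := by rw [zero_add, add_sub_cancel]
  have hneg : ∫ t in (a - 1)..0, g t = 0 := by
    rw [intervalIntegral.integral_congr (g := fun _ => (0:ℝ)), intervalIntegral.integral_zero]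
    intro t ht
    rw [Set.uIcc_of_le (by linarith)] at ht
    simp [g, max_eq_right ht.2, hf0]
  have hpos : ∫ t in (0:ℝ)..a, g t = ∫ t in (0:ℝ)..a, f t := by
    refine intervalIntegral.integral_congr fun t ht => ?_
    rw [Set.uIcc_of_le ha₀] at ht
    simp [g, max_eq_left ht.1]
  rw [hshift, ← intervalIntegral.integral_add_adjacent_intervals (b := 0)
    (hg.intervalIntegrable _ _) (hg.intervalIntegrable _ _), hneg, zero_add, hpos]

lemma integral_rpow_sub_id {α : ℝ} (hα : -1 < α) (a : ℝ) :
    ∫ t in (0:ℝ)..a, (t ^ α - t) = a ^ (α + 1) / (α + 1) - a ^ 2 / 2 := by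
  rw [intervalIntegral.integral_sub (intervalIntegral.intervalIntegrable_rpow' hα)
    intervalIntegral.intervalIntegrable_id, integral_rpow (Or.inl hα), integral_id,
    Real.zero_rpow (by linarith)]
  ring

lemma integral_integral_rpow_sub_id {α : ℝ} (hα : -1 < α) :
    ∫ u in (0:ℝ)..1, ∫ t in (0:ℝ)..u, (t ^ α - t) = 1 / ((α + 1) * (α + 2)) - 1 / 6 := by
  have hα₁ : -1 < α + 1 := by linarith
  simp only [integral_rpow_sub_id hα]
  rw [intervalIntegral.integral_sub
      ((intervalIntegral.intervalIntegrable_rpow' hα₁).div_const _)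
      ((intervalIntegral.intervalIntegrable_pow 2).div_const _),
    intervalIntegral.integral_div, intervalIntegral.integral_div, integral_rpow (Or.inl hα₁),
    integral_pow, Real.zero_rpow (by linarith), Real.one_rpow]
  field_simp
  ring

/-- CCTE of the bivariate Fréchet–Hoeffding lower bound copula
W(u₁,u₂) = max{u₁+u₂-1,0} equals (α+4)/(6(α+1)(α+2)). -/
theorem ccte_frechet_lower (α : ℝ) (hα : α ∈ Set.Ioo (0:ℝ) 1 ∪ Set.Ioi (1:ℝ)) :
    -∫ u₁ in Set.Icc (0:ℝ) 1, ∫ u₂ in Set.Icc (0:ℝ) 1,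
        max (u₁ + u₂ - 1) 0 * ((max (u₁ + u₂ - 1) 0) ^ (α - 1) - 1) / (α - 1)
      = (α + 4) / (6 * (α + 1) * (α + 2)) := by
  obtain ⟨hα₀, hα₁⟩ : 0 < α ∧ α - 1 ≠ 0 := by
    rcases hα with ⟨h₀, h₁⟩ | h
    · exact ⟨h₀, by linarith⟩
    · exact ⟨by linarith [Set.mem_Ioi.mp h], by linarith [Set.mem_Ioi.mp h]⟩
  have hf : Continuous fun t : ℝ => t ^ α - t :=
    (Real.continuous_rpow_const hα₀.le).sub continuous_id
  have hinner : ∀ u₁ ∈ Set.uIcc (0:ℝ) 1,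
      ∫ u₂ in Set.Icc (0:ℝ) 1,
          max (u₁ + u₂ - 1) 0 * ((max (u₁ + u₂ - 1) 0) ^ (α - 1) - 1) / (α - 1)
        = (∫ t in (0:ℝ)..u₁, (t ^ α - t)) / (α - 1) := by
    intro u₁ hu₁
    rw [Set.uIcc_of_le zero_le_one] at hu₁
    simp only [mul_rpow_sub_one_sub_one (le_max_right _ 0) hα₀.ne']
    rw [setIntegral_Icc_eq_intervalIntegral zero_le_one, intervalIntegral.integral_div,
      intervalIntegral.integral_comp_max_add_sub_one hf (by simp [Real.zero_rpow hα₀.ne'])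
        hu₁.1 hu₁.2]
  rw [setIntegral_Icc_eq_intervalIntegral zero_le_one, intervalIntegral.integral_congr hinner,
    intervalIntegral.integral_div, integral_integral_rpow_sub_id (by linarith)]
  have : α + 1 ≠ 0 := by linarith
  have : α + 2 ≠ 0 := by linarith
  field_simp
  ring
end

section
/- The cumulative copula Tsallis entropy of the d-dimensional product copula Π(u) = u₁u₂⋯u_d equals ((α+1)^d - 2^d)/(2^d(α²-1)(α+1)^(d-1)) for every α ∈ (0,1) ∪ (1,∞). -/
open MeasureTheory

lemma prod_integral_aux (d : ℕ) (g : ℝ → ℝ) :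
    ∫ u in Set.univ.pi (fun _ : Fin d => Set.Icc (0:ℝ) 1), ∏ i, g (u i)
      = (∫ x in Set.Icc (0:ℝ) 1, g x) ^ d := by
  have hS : MeasurableSet (Set.univ.pi (fun _ : Fin d => Set.Icc (0:ℝ) 1)) :=
    MeasurableSet.univ_pi fun _ => measurableSet_Icc
  rw [← integral_indicator hS]
  have key : ∀ u : Fin d → ℝ,
      (Set.univ.pi (fun _ : Fin d => Set.Icc (0:ℝ) 1)).indicator
        (fun u => ∏ i, g (u i)) u = ∏ i, (Set.Icc (0:ℝ) 1).indicator g (u i) := by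
    intro u
    by_cases h : u ∈ Set.univ.pi (fun _ : Fin d => Set.Icc (0:ℝ) 1)
    · rw [Set.indicator_of_mem h]
      exact Finset.prod_congr rfl fun i _ =>
        (Set.indicator_of_mem (h i (Set.mem_univ i)) g).symm
    · rw [Set.indicator_of_notMem h]
      obtain ⟨i, hi⟩ := not_forall.mp (fun h' => h fun i _ => h' i)
      exact (Finset.prod_eq_zero (Finset.mem_univ i)
        (Set.indicator_of_notMem hi g)).symm
  simp_rw [key]
  rw [integral_fintype_prod_volume_eq_prod (ι := Fin d) (fun _ => (Set.Icc (0:ℝ) 1).indicator g),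
    Finset.prod_const, Finset.card_univ, Fintype.card_fin]
  congr 1
  rw [integral_indicator measurableSet_Icc]

/-- CCTE of the d-dimensional product copula Π(u) = u₁⋯u_d equals
((α+1)^d - 2^d)/(2^d (α²-1)(α+1)^(d-1)). -/
theorem ccte_product_copula (d : ℕ) (hd : 0 < d)
    (α : ℝ) (hα : α ∈ Set.Ioo (0:ℝ) 1 ∪ Set.Ioi (1:ℝ)) :
    (α - 1)⁻¹ * ∫ u in Set.univ.pi (fun _ : Fin d => Set.Icc (0:ℝ) 1),
        ((∏ i, u i) - (∏ i, u i) ^ α)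
      = ((α + 1) ^ d - 2 ^ d) / (2 ^ d * (α ^ 2 - 1) * (α + 1) ^ (d - 1)) := by
  have hα0 : 0 < α := by
    rcases hα with h | h
    · exact h.1
    · exact lt_trans one_pos (Set.mem_Ioi.mp h)
  have hα1 : α ≠ 1 := by
    rcases hα with h | h
    · exact ne_of_lt h.2
    · exact (Set.mem_Ioi.mp h).ne'
  have hS : MeasurableSet (Set.univ.pi (fun _ : Fin d => Set.Icc (0:ℝ) 1)) :=
    MeasurableSet.univ_pi fun _ => measurableSet_Icc
  -- rewrite integrand on the set
  have hcongr : ∫ u in Set.univ.pi (fun _ : Fin d => Set.Icc (0:ℝ) 1),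
        ((∏ i, u i) - (∏ i, u i) ^ α)
      = ∫ u in Set.univ.pi (fun _ : Fin d => Set.Icc (0:ℝ) 1),
        ((∏ i, u i) - ∏ i, (u i) ^ α) := by
    refine setIntegral_congr_fun hS fun u hu => ?_
    have : (∏ i, u i) ^ α = ∏ i, (u i) ^ α :=
      (Real.finset_prod_rpow Finset.univ u (fun i _ => (hu i (Set.mem_univ i)).1) α).symm
    rw [this]
  rw [hcongr]
  -- integrability of the two pieces
  have haux : ∀ g : ℝ → ℝ, IntegrableOn g (Set.Icc (0:ℝ) 1) →
      IntegrableOn (fun u : Fin d → ℝ => ∏ i, g (u i))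
        (Set.univ.pi (fun _ : Fin d => Set.Icc (0:ℝ) 1)) := by
    intro g hg
    rw [← integrable_indicator_iff hS]
    have key : ∀ u : Fin d → ℝ,
        (Set.univ.pi (fun _ : Fin d => Set.Icc (0:ℝ) 1)).indicator
          (fun u => ∏ i, g (u i)) u = ∏ i, (Set.Icc (0:ℝ) 1).indicator g (u i) := by
      intro u
      by_cases h : u ∈ Set.univ.pi (fun _ : Fin d => Set.Icc (0:ℝ) 1)
      · rw [Set.indicator_of_mem h]
        exact Finset.prod_congr rfl fun i _ =>
          (Set.indicator_of_mem (h i (Set.mem_univ i)) g).symm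
      · rw [Set.indicator_of_notMem h]
        obtain ⟨i, hi⟩ := not_forall.mp (fun h' => h fun i _ => h' i)
        exact (Finset.prod_eq_zero (Finset.mem_univ i)
          (Set.indicator_of_notMem hi g)).symm
    rw [funext key]
    exact Integrable.fintype_prod (f := fun _ : Fin d => (Set.Icc (0:ℝ) 1).indicator g)
      fun _ => (integrable_indicator_iff measurableSet_Icc).mpr hg
  have hid : IntegrableOn (fun x : ℝ => x) (Set.Icc (0:ℝ) 1) :=
    (continuous_id.continuousOn).integrableOn_compact isCompact_Icc
  have hrpow : IntegrableOn (fun x : ℝ => x ^ α) (Set.Icc (0:ℝ) 1) := by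
    refine ContinuousOn.integrableOn_compact isCompact_Icc ?_
    exact continuousOn_id.rpow_const fun x _ => Or.inr hα0.le
  rw [integral_sub (haux _ hid) (haux _ hrpow),
    prod_integral_aux d (fun x => x), prod_integral_aux d (fun x => x ^ α)]
  -- compute the 1-d integrals
  have h1 : ∫ x in Set.Icc (0:ℝ) 1, x = 1 / 2 := by
    rw [integral_Icc_eq_integral_Ioc, ← intervalIntegral.integral_of_le (by norm_num : (0:ℝ) ≤ 1),
      integral_id]
    norm_num
  have h2 : ∫ x in Set.Icc (0:ℝ) 1, x ^ α = 1 / (α + 1) := by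
    rw [integral_Icc_eq_integral_Ioc, ← intervalIntegral.integral_of_le (by norm_num : (0:ℝ) ≤ 1),
      integral_rpow (Or.inl (by linarith : (-1:ℝ) < α))]
    rw [Real.one_rpow, Real.zero_rpow (by linarith : α + 1 ≠ 0)]
    ring
  rw [h1, h2]
  -- algebra
  obtain ⟨k, rfl⟩ : ∃ k, d = k + 1 := ⟨d - 1, (Nat.succ_pred_eq_of_pos hd).symm⟩
  have hαa : α + 1 ≠ 0 := by linarith
  have hαb : α - 1 ≠ 0 := sub_ne_zero.mpr hα1
  have h2k : (2:ℝ) ^ (k + 1) ≠ 0 := by positivity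
  have hαk : (α + 1) ^ (k + 1) ≠ 0 := pow_ne_zero _ hαa
  simp only [Nat.add_sub_cancel]
  have hsq : α ^ 2 - 1 = (α - 1) * (α + 1) := by ring
  rw [hsq, eq_div_iff (mul_ne_zero (mul_ne_zero h2k (mul_ne_zero hαb hαa)) (pow_ne_zero k hαa)),
    div_pow, div_pow, one_pow, inv_mul_eq_div, div_sub_div _ _ h2k hαk, div_mul_eq_mul_div,
    div_mul_eq_mul_div, div_div, div_eq_iff (mul_ne_zero (mul_ne_zero h2k hαk) hαb), pow_succ (α + 1) k]
  ring
end

section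
/- The cumulative copula Tsallis entropy of the d-dimensional Fréchet–Hoeffding upper bound copula M(u) = min{u₁,…,u_d} equals (d/(α-1))·(B(2,d) - B(α+1,d)), where B is the Beta function, for every α ∈ (0,1) ∪ (1,∞). -/
open MeasureTheory

/-- The Beta function B(p,q) = ∫₀¹ t^(p-1) (1-t)^(q-1) dt. -/
noncomputable def BetaFn (p q : ℝ) : ℝ :=
  ∫ t in Set.Icc (0:ℝ) 1, t ^ (p - 1) * (1 - t) ^ (q - 1)

noncomputable def Ir (p q : ℝ) : ℝ :=
  ∫ x in (0:ℝ)..1, x ^ (p - 1) * (1 - x) ^ (q - 1)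

lemma betaFn_eq (p q : ℝ) : BetaFn p q = Ir p q := by
  rw [BetaFn, Ir, intervalIntegral.integral_of_le zero_le_one,
    ← MeasureTheory.integral_Icc_eq_integral_Ioc]

lemma complex_beta (p q : ℝ) :
    Complex.betaIntegral (p : ℂ) (q : ℂ) = ((Ir p q : ℝ) : ℂ) := by
  rw [Complex.betaIntegral, Ir, ← intervalIntegral.integral_ofReal]
  apply intervalIntegral.integral_congr
  intro x hx
  rw [Set.uIcc_of_le zero_le_one] at hx
  push_cast
  rw [Complex.ofReal_cpow hx.1, Complex.ofReal_cpow (by linarith [hx.2] : (0:ℝ) ≤ 1 - x)]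
  push_cast
  ring

lemma beta_rec {p q : ℝ} (hp : 0 < p) (hq : 0 < q) :
    p * Ir p (q + 1) = q * Ir (p + 1) q := by
  have h := Complex.betaIntegral_recurrence (u := (p:ℂ)) (v := (q:ℂ)) (by simpa) (by simpa)
  rw [show ((p:ℂ) + 1) = (((p + 1 : ℝ)) : ℂ) by push_cast; ring,
      show ((q:ℂ) + 1) = (((q + 1 : ℝ)) : ℂ) by push_cast; ring,
      complex_beta, complex_beta] at h
  exact_mod_cast h

lemma subst_lemma (d : ℕ) {β : ℝ} (hβ : 0 < β) :
    ∫ u in (0:ℝ)..1, (1 - u ^ β⁻¹) ^ d = β * Ir β (d + 1) := by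
  have hβ' : β ≠ 0 := hβ.ne'
  set g : ℝ → ℝ := fun u => (1 - u ^ β⁻¹) ^ d with hg
  set f : ℝ → ℝ := fun x => x ^ β with hfd
  have hcpow : Continuous fun u : ℝ => u ^ β⁻¹ :=
    continuous_iff_continuousAt.2 fun x =>
      Real.continuousAt_rpow_const x _ (Or.inr (by positivity : (0:ℝ) ≤ β⁻¹))
  have hcg : Continuous g := (continuous_const.sub hcpow).pow d
  have hcf : Continuous f :=
    continuous_iff_continuousAt.2 fun x => Real.continuousAt_rpow_const x _ (Or.inr hβ.le)
  have hff' : ∀ x ∈ Set.Ioo (min (0:ℝ) 1) (max 0 1),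
      HasDerivWithinAt f (β * x ^ (β - 1)) (Set.Ioi x) x := by
    intro x hx
    simp only [min_self, min_eq_left zero_le_one, max_eq_right zero_le_one] at hx
    exact (Real.hasDerivAt_rpow_const (Or.inl hx.1.ne')).hasDerivWithinAt
  have hg1 : IntegrableOn g (f '' Set.uIcc 0 1) :=
    hcg.continuousOn.integrableOn_compact (isCompact_uIcc.image hcf)
  have hg2 : IntegrableOn (fun x => (β * x ^ (β - 1)) • (g ∘ f) x) (Set.uIcc 0 1) := by
    rw [Set.uIcc_of_le zero_le_one]
    have h1 : IntegrableOn (fun x : ℝ => x ^ (β - 1)) (Set.Icc (0:ℝ) 1) := by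
      have := intervalIntegral.intervalIntegrable_rpow' (a := (0:ℝ)) (b := 1)
        (show (-1:ℝ) < β - 1 by linarith)
      rwa [intervalIntegrable_iff_integrableOn_Icc_of_le zero_le_one] at this
    have h2 : IntegrableOn (fun x : ℝ => β * x ^ (β - 1)) (Set.Icc (0:ℝ) 1) :=
      h1.const_mul β
    have : Integrable (fun x => (g ∘ f) x * (β * x ^ (β - 1)))
        (volume.restrict (Set.Icc (0:ℝ) 1)) := by
      apply Integrable.bdd_mul (c := 1) h2 ((hcg.comp hcf).aestronglyMeasurable)
      filter_upwards [ae_restrict_mem measurableSet_Icc] with x hx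
      have hx0 : (0:ℝ) ≤ x := hx.1
      have hfx0 : (0:ℝ) ≤ f x := Real.rpow_nonneg hx0 β
      have hfx1 : f x ≤ 1 := Real.rpow_le_one hx0 hx.2 hβ.le
      have h01 : (0:ℝ) ≤ (f x) ^ β⁻¹ := Real.rpow_nonneg hfx0 _
      have h02 : (f x) ^ β⁻¹ ≤ 1 := Real.rpow_le_one hfx0 hfx1 (by positivity)
      have : |(1 - (f x) ^ β⁻¹) ^ d| ≤ 1 := by
        rw [abs_of_nonneg (pow_nonneg (by linarith) d)]
        exact pow_le_one₀ (by linarith) (by linarith)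
      simpa [g, Function.comp, Real.norm_eq_abs] using this
    simpa [IntegrableOn, mul_comm, mul_assoc, mul_left_comm, smul_eq_mul] using this
  have key := intervalIntegral.integral_comp_smul_deriv''' (a := (0:ℝ)) (b := 1)
    hcf.continuousOn hff'
    (hcg.continuousOn.mono (Set.subset_univ _)) hg1 hg2
  have hf0 : f 0 = 0 := Real.zero_rpow hβ'
  have hf1 : f 1 = 1 := Real.one_rpow β
  rw [hf0, hf1] at key
  have e1 : ∫ x in (0:ℝ)..1, (β * x ^ (β - 1)) • (g ∘ f) x
      = ∫ x in (0:ℝ)..1, β * (x ^ (β - 1) * (1 - x) ^ d) := by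
    apply intervalIntegral.integral_congr
    intro x hx
    rw [Set.uIcc_of_le zero_le_one] at hx
    have : (x ^ β) ^ β⁻¹ = x := by
      rw [← Real.rpow_mul hx.1, mul_inv_cancel₀ hβ', Real.rpow_one]
    simp only [g, f, Function.comp, smul_eq_mul, this]
    ring
  rw [e1] at key
  rw [← key, intervalIntegral.integral_const_mul, Ir]
  congr 1
  apply intervalIntegral.integral_congr
  intro x _
  simp only [show ((d:ℝ) + 1 - 1) = (d:ℝ) by ring, Real.rpow_natCast]

lemma int_min_rpow (d : ℕ) (hd : 0 < d) {β : ℝ} (hβ : 0 < β) :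
    ∫ u in Set.univ.pi (fun _ : Fin d => Set.Icc (0:ℝ) 1), (⨅ i, u i) ^ β
      = d * BetaFn (β + 1) (d : ℝ) := by
  haveI : Nonempty (Fin d) := ⟨⟨0, hd⟩⟩
  have hβ' : β ≠ 0 := hβ.ne'
  set B : Set (Fin d → ℝ) := Set.univ.pi (fun _ => Set.Icc (0:ℝ) 1) with hB
  have hBm : MeasurableSet B := MeasurableSet.univ_pi fun _ => measurableSet_Icc
  have hmin : Measurable fun u : Fin d → ℝ => ⨅ i, u i :=
    Measurable.iInf fun i => measurable_pi_apply i
  have hcont : Continuous fun x : ℝ => x ^ β :=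
    continuous_iff_continuousAt.2 fun x => Real.continuousAt_rpow_const x _ (Or.inr hβ.le)
  have hmeas : Measurable fun u : Fin d → ℝ => (⨅ i, u i) ^ β :=
    hcont.measurable.comp hmin
  have hvol : volume B = 1 := by
    rw [hB, volume_pi_pi]
    simp [Real.volume_Icc]
  have hboxmem : ∀ u : Fin d → ℝ, u ∈ B → ∀ i, u i ∈ Set.Icc (0:ℝ) 1 := by
    intro u hu i; exact hu i (Set.mem_univ i)
  have hmin_mem : ∀ u : Fin d → ℝ, (∀ i, u i ∈ Set.Icc (0:ℝ) 1) →
      0 ≤ ⨅ i, u i ∧ ⨅ i, u i ≤ 1 := by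
    intro u hu
    exact ⟨le_ciInf fun i => (hu i).1,
      le_trans (ciInf_le (Set.finite_range u).bddBelow ⟨0, hd⟩) (hu ⟨0, hd⟩).2⟩
  have hint : IntegrableOn (fun u : Fin d → ℝ => (⨅ i, u i) ^ β) B := by
    apply Measure.integrableOn_of_bounded (M := 1) (by simp [hvol]) hmeas.aestronglyMeasurable
    filter_upwards [ae_restrict_mem hBm] with u hu
    obtain ⟨h0, h1⟩ := hmin_mem u (hboxmem u hu)
    rw [Real.norm_eq_abs, abs_of_nonneg (Real.rpow_nonneg h0 β)]
    exact Real.rpow_le_one h0 h1 hβ.le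
  have hnn : 0 ≤ᵐ[volume.restrict B] fun u : Fin d → ℝ => (⨅ i, u i) ^ β := by
    filter_upwards [ae_restrict_mem hBm] with u hu
    exact Real.rpow_nonneg (hmin_mem u (hboxmem u hu)).1 β
  rw [show (∫ u in B, (⨅ i, u i) ^ β) = ∫ u, (fun v : Fin d → ℝ => (⨅ i, v i) ^ β) u
      ∂(volume.restrict B) from rfl,
    hint.integral_eq_integral_meas_lt hnn]
  have hkey : ∀ t ∈ Set.Ioi (0:ℝ),
      ((volume.restrict B) {u : Fin d → ℝ | t < (⨅ i, u i) ^ β}).toReal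
        = Set.indicator (Set.Ioc (0:ℝ) 1) (fun s => (1 - s ^ β⁻¹) ^ d) t := by
    intro t ht
    rw [Set.mem_Ioi] at ht
    have hms : MeasurableSet {u : Fin d → ℝ | t < (⨅ i, u i) ^ β} :=
      measurableSet_lt measurable_const hmeas
    rw [Measure.restrict_apply hms]
    rcases le_or_gt t 1 with h1 | h1
    · set c := t ^ β⁻¹ with hc
      have hc0 : 0 < c := Real.rpow_pos_of_pos ht _
      have hc1 : c ≤ 1 := Real.rpow_le_one ht.le h1 (by positivity)
      have hset : {u : Fin d → ℝ | t < (⨅ i, u i) ^ β} ∩ B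
          = Set.univ.pi (fun _ : Fin d => Set.Ioc c 1) := by
        ext u
        simp only [Set.mem_inter_iff, Set.mem_setOf_eq, hB, Set.mem_pi, Set.mem_univ,
          forall_true_left, Set.mem_Ioc, Set.mem_Icc, true_implies]
        constructor
        · rintro ⟨htf, hbox⟩
          have h0 : 0 ≤ ⨅ i, u i := le_ciInf fun i => (hbox i).1
          have hlt : c < ⨅ i, u i := by
            have h2 := Real.rpow_lt_rpow ht.le htf (by positivity : (0:ℝ) < β⁻¹)
            have h3 : ((⨅ i, u i) ^ β) ^ β⁻¹ = ⨅ i, u i := by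
              rw [← Real.rpow_mul h0, mul_inv_cancel₀ hβ', Real.rpow_one]
            rwa [h3] at h2
          exact fun i =>
            ⟨lt_of_lt_of_le hlt (ciInf_le (Set.finite_range u).bddBelow i), (hbox i).2⟩
        · intro h
          have hbox : ∀ i, 0 ≤ u i ∧ u i ≤ 1 := fun i =>
            ⟨le_trans hc0.le (h i).1.le, (h i).2⟩
          refine ⟨?_, hbox⟩
          obtain ⟨i₀, hi₀⟩ := Finite.exists_min u
          have hmin0 : (⨅ i, u i) = u i₀ :=
            le_antisymm (ciInf_le (Set.finite_range u).bddBelow i₀) (le_ciInf hi₀)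
          have hcm : c < ⨅ i, u i := by rw [hmin0]; exact (h i₀).1
          have h2 := Real.rpow_lt_rpow hc0.le hcm hβ
          rwa [hc, ← Real.rpow_mul ht.le, inv_mul_cancel₀ hβ', Real.rpow_one] at h2
      rw [hset, volume_pi_pi]
      simp only [Real.volume_Ioc]
      rw [Finset.prod_const, Finset.card_univ, Fintype.card_fin,
        Set.indicator_of_mem (show t ∈ Set.Ioc (0:ℝ) 1 from ⟨ht, h1⟩), ENNReal.toReal_pow,
        ENNReal.toReal_ofReal (by linarith)]
    · rw [Set.indicator_of_notMem (by simp [Set.mem_Ioc]; intro; linarith)]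
      have hempty : {u : Fin d → ℝ | t < (⨅ i, u i) ^ β} ∩ B = ∅ := by
        rw [Set.eq_empty_iff_forall_notMem]
        rintro u ⟨htf, hbox⟩
        obtain ⟨h0, hle1⟩ := hmin_mem u (hboxmem u hbox)
        have : (⨅ i, u i) ^ β ≤ 1 := Real.rpow_le_one h0 hle1 hβ.le
        rw [Set.mem_setOf_eq] at htf
        linarith
      rw [hempty]
      simp
  simp only [measureReal_def]
  rw [setIntegral_congr_fun measurableSet_Ioi hkey,
    setIntegral_indicator measurableSet_Ioc,
    Set.inter_eq_self_of_subset_right Set.Ioc_subset_Ioi_self,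
    ← intervalIntegral.integral_of_le zero_le_one,
    subst_lemma d hβ, beta_rec hβ (by exact_mod_cast hd : (0:ℝ) < (d:ℝ)),
    ← betaFn_eq]

lemma min_rpow_integrableOn (d : ℕ) (hd : 0 < d) {β : ℝ} (hβ : 0 < β) :
    IntegrableOn (fun u : Fin d → ℝ => (⨅ i, u i) ^ β)
      (Set.univ.pi (fun _ : Fin d => Set.Icc (0:ℝ) 1)) := by
  haveI : Nonempty (Fin d) := ⟨⟨0, hd⟩⟩
  set B : Set (Fin d → ℝ) := Set.univ.pi (fun _ => Set.Icc (0:ℝ) 1) with hB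
  have hBm : MeasurableSet B := MeasurableSet.univ_pi fun _ => measurableSet_Icc
  have hmin : Measurable fun u : Fin d → ℝ => ⨅ i, u i :=
    Measurable.iInf fun i => measurable_pi_apply i
  have hcont : Continuous fun x : ℝ => x ^ β :=
    continuous_iff_continuousAt.2 fun x => Real.continuousAt_rpow_const x _ (Or.inr hβ.le)
  have hvol : volume B = 1 := by
    rw [hB, volume_pi_pi]
    simp [Real.volume_Icc]
  apply Measure.integrableOn_of_bounded (M := 1) (by simp [hvol])
    (hcont.measurable.comp hmin).aestronglyMeasurable
  filter_upwards [ae_restrict_mem hBm] with u hu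
  have h0 : 0 ≤ ⨅ i, u i := le_ciInf fun i => (hu i (Set.mem_univ i)).1
  have h1 : ⨅ i, u i ≤ 1 :=
    le_trans (ciInf_le (Set.finite_range u).bddBelow ⟨0, hd⟩) (hu ⟨0, hd⟩ (Set.mem_univ _)).2
  simp only [Function.comp_apply, Real.norm_eq_abs]
  rw [abs_of_nonneg (Real.rpow_nonneg h0 β)]
  exact Real.rpow_le_one h0 h1 hβ.le

/-- CCTE of the d-dimensional Fréchet–Hoeffding upper bound copula
M(u) = min{u₁,…,u_d} equals (d/(α-1))·(B(2,d) - B(α+1,d)). -/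
theorem ccte_frechet_upper (d : ℕ) (hd : 0 < d)
    (α : ℝ) (hα : α ∈ Set.Ioo (0:ℝ) 1 ∪ Set.Ioi (1:ℝ)) :
    (α - 1)⁻¹ * ∫ u in Set.univ.pi (fun _ : Fin d => Set.Icc (0:ℝ) 1),
        ((⨅ i, u i) - (⨅ i, u i) ^ α)
      = ((d : ℝ) / (α - 1)) * (BetaFn 2 d - BetaFn (α + 1) d) := by
  have hα0 : 0 < α := hα.elim (fun h => h.1) (fun h => lt_trans one_pos h)
  have h1 := min_rpow_integrableOn d hd one_pos
  have h2 := min_rpow_integrableOn d hd hα0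
  have e : (fun u : Fin d → ℝ => (⨅ i, u i) - (⨅ i, u i) ^ α)
      = fun u : Fin d → ℝ => (⨅ i, u i) ^ (1:ℝ) - (⨅ i, u i) ^ α := by
    funext u; rw [Real.rpow_one]
  rw [e, integral_sub h1 h2, int_min_rpow d hd one_pos, int_min_rpow d hd hα0,
    show (1:ℝ) + 1 = 2 by norm_num, div_eq_mul_inv]
  ring
end

section
/- For a d-dimensional copula C with CCTE ξ_α(C) and cumulative copula entropy ξ(C) = -∫_{[0,1]^d} C(u)log(C(u)) du, one has ξ_α(C) ≥ ξ(C) if α ∈ (0,1) and ξ_α(C) ≤ ξ(C) if α ∈ (1,∞). -/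
/-!
For `r ∈ [0,1]`, `log x ≤ x - 1` at `x = r ^ (α - 1)` gives `(α - 1) r log r ≤ r ^ α - r`.
Applied to `r = C u` and integrated over the cube (all integrands are bounded, since
`0 ≤ C ≤ 1`), this yields `∫ (C - C ^ α) ≤ (α - 1) ξ(C)`; dividing by `α - 1` gives both
inequalities, the direction depending on the sign of `α - 1`.
-/

open MeasureTheory

/-- The unit cube [0,1]^d. -/
def unitCube (d : ℕ) : Set (Fin d → ℝ) :=
  Set.univ.pi (fun _ : Fin d => Set.Icc (0:ℝ) 1)

/-- `C` is a d-dimensional copula: it is the joint CDF of a probability measure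
concentrated on [0,1]^d with uniform marginals. -/
def IsCopula {d : ℕ} (C : (Fin d → ℝ) → ℝ) : Prop :=
  ∃ μ : Measure (Fin d → ℝ), IsProbabilityMeasure μ ∧
    μ (unitCube d) = 1 ∧
    (∀ i : Fin d, ∀ t ∈ Set.Icc (0:ℝ) 1, (μ {x | x i ≤ t}).toReal = t) ∧
    (∀ u, C u = (μ {x | ∀ i, x i ≤ u i}).toReal)

/-- Cumulative copula Tsallis entropy ξ_α(C) = (1/(α-1)) ∫_{[0,1]^d} (C(u) - C(u)^α) du. -/
noncomputable def ccte {d : ℕ} (α : ℝ) (C : (Fin d → ℝ) → ℝ) : ℝ :=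
  (α - 1)⁻¹ * ∫ u in unitCube d, (C u - C u ^ α)

/-- Cumulative copula (Shannon) entropy ξ(C) = -∫ C(u) log C(u) du. -/
noncomputable def cce {d : ℕ} (C : (Fin d → ℝ) → ℝ) : ℝ :=
  -∫ u in unitCube d, C u * Real.log (C u)


namespace Real

theorem sub_rpow_le_mul_neg_mul_log (α : ℝ) {r : ℝ} (hr : 0 ≤ r) :
    r - r ^ α ≤ (α - 1) * -(r * log r) := by
  rcases hr.eq_or_lt with rfl | hr
  · simpa using zero_rpow_nonneg α
  · have hlog : (α - 1) * log r ≤ r ^ (α - 1) - 1 := by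
      simpa only [log_rpow hr] using log_le_sub_one_of_pos (rpow_pos_of_pos hr (α - 1))
    have hpow : r * r ^ (α - 1) = r ^ α := by
      rw [rpow_sub_one hr.ne', mul_div_cancel₀ _ hr.ne']
    nlinarith [mul_le_mul_of_nonneg_left hlog hr.le]

end Real

open Real in
theorem integral_sub_rpow_le_mul_neg_integral_mul_log {X : Type*} [MeasurableSpace X]
    {ν : Measure X} [IsFiniteMeasure ν] {f : X → ℝ} (hf : Measurable f)
    (hf0 : ∀ x, 0 ≤ f x) (hf1 : ∀ x, f x ≤ 1) {α : ℝ} (hα : 0 ≤ α) :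
    ∫ x, (f x - f x ^ α) ∂ν ≤ (α - 1) * -∫ x, f x * log (f x) ∂ν := by
  have hint_pow : Integrable (fun x => f x - f x ^ α) ν := by
    refine Integrable.mono' (integrable_const 1)
      (hf.sub (hf.pow_const α)).aestronglyMeasurable (ae_of_all _ fun x => ?_)
    have := rpow_nonneg (hf0 x) α
    have := rpow_le_one (hf0 x) (hf1 x) hα
    rw [norm_eq_abs, abs_le]
    constructor <;> linarith [hf0 x, hf1 x]
  have hint_log : Integrable (fun x => f x * log (f x)) ν := by
    refine Integrable.mono' (integrable_const 1)
      (hf.mul (measurable_log.comp hf)).aestronglyMeasurable (ae_of_all _ fun x => ?_)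
    rcases (hf0 x).eq_or_lt with h | h
    · simp [← h]
    · simpa only [norm_eq_abs, mul_comm] using (abs_log_mul_self_lt (f x) h (hf1 x)).le
  calc ∫ x, (f x - f x ^ α) ∂ν ≤ ∫ x, (α - 1) * -(f x * log (f x)) ∂ν :=
        integral_mono hint_pow (hint_log.neg.const_mul _)
          fun x => sub_rpow_le_mul_neg_mul_log α (hf0 x)
    _ = (α - 1) * -∫ x, f x * log (f x) ∂ν := by rw [integral_const_mul, integral_neg]

namespace IsCopula

variable {d : ℕ} {C : (Fin d → ℝ) → ℝ}

theorem measurable (hC : IsCopula C) : Measurable C := by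
  obtain ⟨μ, hμ, -, -, hCμ⟩ := hC
  have hle : MeasurableSet {p : (Fin d → ℝ) × (Fin d → ℝ) | p.2 ≤ p.1} :=
    measurableSet_le measurable_snd measurable_fst
  have hC_eq : C = fun u => (μ (Prod.mk u ⁻¹' {p | p.2 ≤ p.1})).toReal := funext hCμ
  rw [hC_eq]
  exact (measurable_measure_prodMk_left hle).ennreal_toReal

theorem mem_Icc (hC : IsCopula C) (u : Fin d → ℝ) : C u ∈ Set.Icc 0 1 := by
  obtain ⟨μ, hμ, -, -, hCμ⟩ := hC
  rw [hCμ u]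
  exact ⟨ENNReal.toReal_nonneg,
    ENNReal.toReal_le_of_le_ofReal zero_le_one (by simpa using prob_le_one)⟩

end IsCopula

theorem isFiniteMeasure_restrict_unitCube (d : ℕ) :
    IsFiniteMeasure (volume.restrict (unitCube d)) :=
  isFiniteMeasure_restrict.2 (isCompact_univ_pi fun _ => isCompact_Icc).measure_lt_top.ne

/-- ξ_α(C) ≥ ξ(C) for α ∈ (0,1) and ξ_α(C) ≤ ξ(C) for α ∈ (1,∞). -/
theorem ccte_vs_cce {d : ℕ} (C : (Fin d → ℝ) → ℝ) (hC : IsCopula C) (α : ℝ) :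
    (α ∈ Set.Ioo (0:ℝ) 1 → cce C ≤ ccte α C) ∧
      (α ∈ Set.Ioi (1:ℝ) → ccte α C ≤ cce C) := by
  have := isFiniteMeasure_restrict_unitCube d
  have key : ∀ β, 0 ≤ β → ∫ u in unitCube d, (C u - C u ^ β) ≤ (β - 1) * cce C :=
    fun β hβ => integral_sub_rpow_le_mul_neg_integral_mul_log hC.measurable
      (fun u => (hC.mem_Icc u).1) (fun u => (hC.mem_Icc u).2) hβ
  refine ⟨fun ⟨hα0, hα1⟩ => ?_, fun hα => ?_⟩
  · rw [ccte, inv_mul_eq_div, le_div_iff_of_neg' (by linarith)]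
    exact key α hα0.le
  · rw [ccte, inv_mul_le_iff₀ (by linarith [Set.mem_Ioi.1 hα])]
    exact key α (by linarith [Set.mem_Ioi.1 hα])
end

section
/- For all r ∈ [0,1] and α ∈ (0,1) ∪ (1,∞): if α ≤ 2 then (r - r^α)/(α-1) ≥ r - r², and if α > 2 then (r - r^α)/(α-1) ≤ r - r². -/
/-!
Writing `p = α - 1` and `r ^ α = r * r ^ p`, both sides carry a factor `r`, so it suffices to
compare `(1 - r ^ p) / p` with `1 - r`. After clearing the denominator this is the comparison of
`r ^ p` with its tangent line `1 + p * (r - 1)` at `r = 1`: Bernoulli's inequality, whose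
direction flips at `p = 1` (`α = 2`) and is restored by the sign change of `p` at `p = 0`.
-/

open Real

namespace Real

theorem one_add_mul_sub_one_le_rpow_of_nonpos {x p : ℝ} (hx : 0 < x) (hp : p ≤ 0) :
    1 + p * (x - 1) ≤ x ^ p := by
  calc 1 + p * (x - 1) ≤ log x * p + 1 := by nlinarith [log_le_sub_one_of_pos hx]
    _ ≤ exp (log x * p) := add_one_le_exp _
    _ = x ^ p := (rpow_def_of_pos hx p).symm

theorem one_sub_le_one_sub_rpow_div {x p : ℝ} (hx : 0 < x) (hp : p ≤ 1) (hp0 : p ≠ 0) :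
    1 - x ≤ (1 - x ^ p) / p := by
  rcases hp0.lt_or_gt with hneg | hpos
  · rw [le_div_iff_of_neg hneg]
    linarith [one_add_mul_sub_one_le_rpow_of_nonpos hx hneg.le]
  · rw [le_div_iff₀ hpos]
    have h := rpow_one_add_le_one_add_mul_self (s := x - 1) (by linarith) hpos.le hp
    rw [add_sub_cancel] at h
    linarith

theorem one_sub_rpow_div_le_one_sub {x p : ℝ} (hx : 0 ≤ x) (hp : 1 ≤ p) :
    (1 - x ^ p) / p ≤ 1 - x := by
  rw [div_le_iff₀ (by linarith)]
  have h := one_add_mul_self_le_rpow_one_add (s := x - 1) (by linarith) hp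
  rw [add_sub_cancel] at h
  linarith

theorem sub_rpow_div_sub_one_eq_mul {r α : ℝ} (hr : 0 ≤ r) (hα : α ≠ 0) :
    (r - r ^ α) / (α - 1) = r * ((1 - r ^ (α - 1)) / (α - 1)) := by
  rw [← mul_div_assoc, mul_sub, mul_one, ← rpow_one_add' hr (by simpa using hα),
    add_sub_cancel]

end Real

/-- For r ∈ [0,1] and α ∈ (0,1) ∪ (1,∞): if α ≤ 2 then
(r - r^α)/(α-1) ≥ r - r², and if α > 2 then (r - r^α)/(α-1) ≤ r - r². -/
theorem ccte_integrand_vs_quadratic (r : ℝ) (hr : r ∈ Set.Icc (0:ℝ) 1)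
    (α : ℝ) (hα : α ∈ Set.Ioo (0:ℝ) 1 ∪ Set.Ioi (1:ℝ)) :
    (α ≤ 2 → r - r ^ 2 ≤ (r - r ^ α) / (α - 1)) ∧
      (2 < α → (r - r ^ α) / (α - 1) ≤ r - r ^ 2) := by
  obtain ⟨hα0, hα1⟩ : 0 < α ∧ α - 1 ≠ 0 := by
    rcases hα with ⟨h0, h1⟩ | h1
    · exact ⟨h0, (sub_neg.2 h1).ne⟩
    · exact ⟨zero_lt_one.trans h1, (sub_pos.2 h1).ne'⟩
  rw [sub_rpow_div_sub_one_eq_mul hr.1 hα0.ne', show r - r ^ 2 = r * (1 - r) by ring]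
  refine ⟨fun hα2 => ?_, fun hα2 => ?_⟩
  · rcases hr.1.eq_or_lt with rfl | hr_pos
    · simp
    exact mul_le_mul_of_nonneg_left (one_sub_le_one_sub_rpow_div hr_pos (by linarith) hα1) hr.1
  · exact mul_le_mul_of_nonneg_left (one_sub_rpow_div_le_one_sub hr.1 (by linarith)) hr.1
end

section
/- The cumulative mutual information of order 2 of the empirical copula based on ranks R_{ik} admits the closed form n·μ₂(Ĉ_n) = (1/n)∑ᵢ∑ⱼ∏ₖ[-log(max{R_{ik}/(n+1), R_{jk}/(n+1)})] - 2∑ᵢ∏ₖ[1 - R_{ik}/(n+1)] + n/2^d, where μ₂(Ĉ_n) = ∫_{[0,1]^d} (Ĉ_n(u) - Π(u))²/Π(u) du. -/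
open MeasureTheory

/-- The empirical copula based on ranks R_{ik} ∈ {1,…,n}. -/
noncomputable def empCopula (d n : ℕ) (R : Fin n → Fin d → ℕ) : (Fin d → ℝ) → ℝ :=
  fun u => (1 / n) * ∑ i, ∏ k, if ((R i k : ℝ) / (n + 1) ≤ u k) then (1:ℝ) else 0

lemma ind_eq_ite {c x : ℝ} (hx : x ≤ 1) (f : ℝ → ℝ) :
    (Set.Icc c 1).indicator f x = if c ≤ x then f x else 0 := by
  rw [Set.indicator_apply]
  by_cases h : c ≤ x <;> simp [Set.mem_Icc, h, hx]

lemma int_inv_val {c : ℝ} (h0 : 0 < c) (h1 : c ≤ 1) :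
    ∫ x : ℝ, (Set.Icc c 1).indicator (fun x => x⁻¹) x = -Real.log c := by
  rw [MeasureTheory.integral_indicator measurableSet_Icc,
    MeasureTheory.integral_Icc_eq_integral_Ioc,
    ← intervalIntegral.integral_of_le h1,
    integral_inv (by simpa [Set.uIcc_of_le h1] using h0), one_div, Real.log_inv]

lemma int_one_val {c : ℝ} (h1 : c ≤ 1) :
    ∫ x : ℝ, (Set.Icc c 1).indicator (fun _ => (1:ℝ)) x = 1 - c := by
  rw [MeasureTheory.integral_indicator measurableSet_Icc, setIntegral_const,
    Real.volume_real_Icc_of_le h1, smul_eq_mul, mul_one]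

lemma int_id_val : ∫ x : ℝ, (Set.Icc (0:ℝ) 1).indicator (fun x => x) x = 1/2 := by
  rw [MeasureTheory.integral_indicator measurableSet_Icc,
    MeasureTheory.integral_Icc_eq_integral_Ioc,
    ← intervalIntegral.integral_of_le zero_le_one, integral_id]
  norm_num

lemma intg_inv {c : ℝ} (h0 : 0 < c) :
    Integrable (Set.indicator (Set.Icc c 1) (fun x : ℝ => x⁻¹)) := by
  rw [integrable_indicator_iff measurableSet_Icc]
  exact ContinuousOn.integrableOn_Icc
    (ContinuousOn.inv₀ continuousOn_id
      (fun x hx => ne_of_gt (lt_of_lt_of_le h0 hx.1)))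

lemma intg_one {c : ℝ} : Integrable (Set.indicator (Set.Icc c 1) (fun _ : ℝ => (1:ℝ))) := by
  rw [integrable_indicator_iff measurableSet_Icc]
  exact integrableOn_const (by simp [Real.volume_Icc])

lemma intg_id : Integrable (Set.indicator (Set.Icc (0:ℝ) 1) (fun x : ℝ => x)) := by
  rw [integrable_indicator_iff measurableSet_Icc]
  exact continuous_id.continuousOn.integrableOn_Icc

/-- closed form for n·μ₂(Ĉ_n), where
μ₂(Ĉ_n) = ∫_{[0,1]^d} (Ĉ_n(u) - Π(u))²/Π(u) du with Π(u) = ∏ₖ u_k. -/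
theorem cmi_two_closed_form (d n : ℕ) (hd : 0 < d) (hn : 0 < n)
    (R : Fin n → Fin d → ℕ) (hR : ∀ i k, R i k ∈ Finset.Icc 1 n) :
    (n : ℝ) * ∫ u in unitCube d, (empCopula d n R u - ∏ k, u k) ^ 2 / ∏ k, u k
      = (1 / n) * ∑ i, ∑ j, ∏ k,
            (-Real.log (max ((R i k : ℝ) / (n + 1)) ((R j k : ℝ) / (n + 1))))
        - 2 * ∑ i, ∏ k, (1 - (R i k : ℝ) / (n + 1)) + (n : ℝ) / 2 ^ d := by
  have hn0 : (n : ℝ) ≠ 0 := Nat.cast_ne_zero.2 hn.ne'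
  set a : Fin n → Fin d → ℝ := fun i k => (R i k : ℝ) / (n + 1) with ha_def
  have ha0 : ∀ i k, 0 < a i k := by
    intro i k
    have h1 : 1 ≤ R i k := (Finset.mem_Icc.1 (hR i k)).1
    have : (0:ℝ) < (R i k : ℝ) := by exact_mod_cast h1
    exact div_pos this (by positivity)
  have ha1 : ∀ i k, a i k ≤ 1 := by
    intro i k
    have h2 : R i k ≤ n := (Finset.mem_Icc.1 (hR i k)).2
    have h2' : (R i k : ℝ) ≤ (n:ℝ) := by exact_mod_cast h2
    rw [div_le_one (by positivity)]
    linarith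
  -- extended per-coordinate functions
  set F : Fin n → Fin n → Fin d → ℝ → ℝ :=
    fun i j k => (Set.Icc (max (a i k) (a j k)) 1).indicator (fun x => x⁻¹) with hF_def
  set G : Fin n → Fin d → ℝ → ℝ :=
    fun i k => (Set.Icc (a i k) 1).indicator (fun _ => (1:ℝ)) with hG_def
  set H : ℝ → ℝ := (Set.Icc (0:ℝ) 1).indicator (fun x => x) with hH_def
  have hmaxpos : ∀ i j k, 0 < max (a i k) (a j k) := fun i j k => lt_max_of_lt_left (ha0 i k)
  have hmaxle : ∀ i j k, max (a i k) (a j k) ≤ 1 := fun i j k => max_le (ha1 i k) (ha1 j k)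
  have hcube : MeasurableSet (unitCube d) :=
    MeasurableSet.univ_pi (fun _ => measurableSet_Icc)
  -- Step 1: rewrite the set integral as a full-space integral of an explicit function
  have key : (∫ u in unitCube d, (empCopula d n R u - ∏ k, u k) ^ 2 / ∏ k, u k)
      = ∫ u : Fin d → ℝ, ((1/(n:ℝ)^2) * ∑ i, ∑ j, ∏ k, F i j k (u k)
          - (2/(n:ℝ)) * ∑ i, ∏ k, G i k (u k) + ∏ k, H (u k)) := by
    rw [← MeasureTheory.integral_indicator hcube]
    congr 1
    funext u
    by_cases hu : u ∈ unitCube d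
    · rw [Set.indicator_of_mem hu]
      have hu' : ∀ k, 0 ≤ u k ∧ u k ≤ 1 := by
        intro k; exact (hu k (Set.mem_univ k))
      have hFeq : ∀ i j k, F i j k (u k)
          = if max (a i k) (a j k) ≤ u k then (u k)⁻¹ else 0 := by
        intro i j k; exact ind_eq_ite (hu' k).2 _
      have hGeq : ∀ i k, G i k (u k) = if a i k ≤ u k then (1:ℝ) else 0 := by
        intro i k; exact ind_eq_ite (hu' k).2 _
      have hHeq : ∀ k, H (u k) = u k := by
        intro k; rw [hH_def, Set.indicator_of_mem (Set.mem_Icc.2 (hu' k))]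
      simp only [hFeq, hGeq, hHeq]
      rw [empCopula]
      set S : ℝ := ∑ i, ∏ k, if a i k ≤ u k then (1:ℝ) else 0 with hS_def
      set P : ℝ := ∏ k, u k with hP_def
      by_cases hz : ∀ k, u k ≠ 0
      · have hP0 : P ≠ 0 := Finset.prod_ne_zero_iff.2 (fun k _ => hz k)
        have key2 : ∀ i j, (∏ k, if max (a i k) (a j k) ≤ u k then (u k)⁻¹ else 0)
            = (∏ k, if a i k ≤ u k then (1:ℝ) else 0)
              * (∏ k, if a j k ≤ u k then (1:ℝ) else 0) * P⁻¹ := by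
          intro i j
          rw [hP_def, ← Finset.prod_inv_distrib, ← Finset.prod_mul_distrib,
            ← Finset.prod_mul_distrib]
          refine Finset.prod_congr rfl (fun k _ => ?_)
          by_cases h1 : a i k ≤ u k <;> by_cases h2 : a j k ≤ u k <;>
            simp [h1, h2, max_le_iff]
        simp only [key2]
        have key3 : ∑ i, ∑ j, (∏ k, if a i k ≤ u k then (1:ℝ) else 0)
            * (∏ k, if a j k ≤ u k then (1:ℝ) else 0) * P⁻¹ = S * S * P⁻¹ := by
          rw [hS_def, Finset.sum_mul_sum]
          simp [Finset.sum_mul]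
        rw [key3]
        field_simp
        ring
      · push_neg at hz
        obtain ⟨k0, hk0⟩ := hz
        have hnle : ∀ c : ℝ, 0 < c → ¬ (c ≤ u k0) := by
          intro c hc hle; rw [hk0] at hle; linarith
        have hP0 : P = 0 := Finset.prod_eq_zero (Finset.mem_univ k0) hk0
        have hS0 : S = 0 := by
          rw [hS_def]
          refine Finset.sum_eq_zero (fun i _ => ?_)
          exact Finset.prod_eq_zero (Finset.mem_univ k0) (by simp [hnle _ (ha0 i k0)])
        have h1 : ∀ i j, (∏ k, if max (a i k) (a j k) ≤ u k then (u k)⁻¹ else 0) = 0 := by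
          intro i j
          exact Finset.prod_eq_zero (Finset.mem_univ k0) (by simp [hnle _ (hmaxpos i j k0)])
        simp only [h1, hS0, hP0]
        simp
    · rw [Set.indicator_of_notMem hu]
      have : ∃ k0, u k0 ∉ Set.Icc (0:ℝ) 1 := by
        by_contra h
        push_neg at h
        exact hu (fun k _ => h k)
      obtain ⟨k0, hk0⟩ := this
      have hnotmem : ∀ c : ℝ, 0 ≤ c → u k0 ∉ Set.Icc c 1 := by
        intro c hc hmem
        exact hk0 ⟨le_trans hc hmem.1, hmem.2⟩
      have h1 : ∀ i j, (∏ k, F i j k (u k)) = 0 := fun i j =>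
        Finset.prod_eq_zero (Finset.mem_univ k0)
          (Set.indicator_of_notMem (hnotmem _ (hmaxpos i j k0).le) _)
      have h2 : ∀ i, (∏ k, G i k (u k)) = 0 := fun i =>
        Finset.prod_eq_zero (Finset.mem_univ k0)
          (Set.indicator_of_notMem (hnotmem _ (ha0 i k0).le) _)
      have h3 : (∏ k, H (u k)) = 0 :=
        Finset.prod_eq_zero (Finset.mem_univ k0)
          (Set.indicator_of_notMem (hnotmem _ le_rfl) _)
      simp [h1, h2, h3]
  rw [key]
  -- Step 2: integrability
  have intF : ∀ i j, Integrable (fun u : Fin d → ℝ => ∏ k, F i j k (u k)) :=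
    fun i j => Integrable.fintype_prod (fun k => intg_inv (hmaxpos i j k))
  have intG : ∀ i, Integrable (fun u : Fin d → ℝ => ∏ k, G i k (u k)) :=
    fun i => Integrable.fintype_prod (fun k => intg_one)
  have intH : Integrable (fun u : Fin d → ℝ => ∏ k, H (u k)) :=
    Integrable.fintype_prod (fun _ => intg_id)
  have intA : Integrable (fun u : Fin d → ℝ =>
      (1/(n:ℝ)^2) * ∑ i, ∑ j, ∏ k, F i j k (u k)) :=
    ((integrable_finset_sum _ (fun i _ => integrable_finset_sum _
      (fun j _ => intF i j))).const_mul _)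
  have intB : Integrable (fun u : Fin d → ℝ =>
      (2/(n:ℝ)) * ∑ i, ∏ k, G i k (u k)) :=
    ((integrable_finset_sum _ (fun i _ => intG i)).const_mul _)
  -- Step 3: split the integral and evaluate via Fubini
  have intAB : Integrable (fun u : Fin d → ℝ =>
      (1/(n:ℝ)^2) * ∑ i, ∑ j, ∏ k, F i j k (u k)
        - (2/(n:ℝ)) * ∑ i, ∏ k, G i k (u k)) := intA.sub intB
  rw [MeasureTheory.integral_add intAB intH]
  rw [MeasureTheory.integral_sub intA intB,
    MeasureTheory.integral_const_mul, MeasureTheory.integral_const_mul,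
    MeasureTheory.integral_finset_sum _ (fun i _ => integrable_finset_sum _
      (fun j _ => intF i j)),
    MeasureTheory.integral_finset_sum _ (fun i _ => intG i)]
  have evF : ∀ i j, (∫ u : Fin d → ℝ, ∏ k, F i j k (u k))
      = ∏ k, (-Real.log (max ((R i k : ℝ)/(n+1)) ((R j k : ℝ)/(n+1)))) := by
    intro i j
    rw [MeasureTheory.volume_pi, MeasureTheory.integral_fintype_prod_eq_prod (ι := Fin d) (fun k => F i j k)]
    exact Finset.prod_congr rfl (fun k _ => int_inv_val (hmaxpos i j k) (hmaxle i j k))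
  have evG : ∀ i, (∫ u : Fin d → ℝ, ∏ k, G i k (u k))
      = ∏ k, (1 - (R i k : ℝ)/(n+1)) := by
    intro i
    rw [MeasureTheory.volume_pi, MeasureTheory.integral_fintype_prod_eq_prod (ι := Fin d) (fun k => G i k)]
    exact Finset.prod_congr rfl (fun k _ => int_one_val (ha1 i k))
  have evH : (∫ u : Fin d → ℝ, ∏ k, H (u k)) = (1/2)^d := by
    rw [MeasureTheory.volume_pi, MeasureTheory.integral_fintype_prod_eq_prod (ι := Fin d) (fun _ => H)]
    simp [hH_def, int_id_val]
  rw [evH]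
  have e1 : (∑ i, ∫ u : Fin d → ℝ, ∑ j, ∏ k, F i j k (u k))
      = ∑ i, ∑ j, ∏ k, (-Real.log (max ((R i k : ℝ)/(n+1)) ((R j k : ℝ)/(n+1)))) := by
    refine Finset.sum_congr rfl (fun i _ => ?_)
    rw [MeasureTheory.integral_finset_sum _ (fun j _ => intF i j)]
    exact Finset.sum_congr rfl (fun j _ => evF i j)
  have e2 : (∑ i, ∫ u : Fin d → ℝ, ∏ k, G i k (u k))
      = ∑ i, ∏ k, (1 - (R i k : ℝ)/(n+1)) :=
    Finset.sum_congr rfl (fun i _ => evG i)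
  rw [e1, e2]
  have hpow : ((2:ℝ))^d ≠ 0 := by positivity
  rw [one_div_pow]
  field_simp
end
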